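/- arXiv:math/0608072 — 2 statements merged into one kernel-verified Lean document; each statement's English description precedes it below -/
import Mathlib

section
/- For real n×n matrices A, B, the determinant of the real 2n×2n block matrix [[A, B], [-B, A]] equals |det(A + iB)|², where A + iB is viewed as a complex n×n matrix. In particular this determinant is nonnegative. -/
open Matrix

theorem block_det_abs_sq (n : ℕ) (A B : Matrix (Fin n) (Fin n) ℝ) :
    (Matrix.fromBlocks A B (-B) A).det =
      ‖(A.map (fun x => (x : ℂ)) + Complex.I • B.map (fun x => (x : ℂ))).det‖ ^ 2 ∧
    0 ≤ (Matrix.fromBlocks A B (-B) A).det := by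
  set A' : Matrix (Fin n) (Fin n) ℂ := A.map (fun x => (x : ℂ)) with hA'
  set B' : Matrix (Fin n) (Fin n) ℂ := B.map (fun x => (x : ℂ)) with hB'
  set z : ℂ := (A' + Complex.I • B').det with hz
  set T : Matrix (Fin n ⊕ Fin n) (Fin n ⊕ Fin n) ℂ :=
    fromBlocks 1 (Complex.I • 1) 0 1 with hT
  set Tinv : Matrix (Fin n ⊕ Fin n) (Fin n ⊕ Fin n) ℂ :=
    fromBlocks 1 (-(Complex.I) • 1) 0 1 with hTinv
  have hTT : T * Tinv = 1 := by
    rw [hT, hTinv, fromBlocks_multiply]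
    simp [fromBlocks_one]
  have hdetT : T.det = 1 := by
    rw [hT, det_fromBlocks_zero₂₁]; simp
  have hdetTinv : Tinv.det = 1 := by
    have := congrArg Matrix.det hTT
    rw [det_mul, hdetT, one_mul, det_one] at this
    exact this
  set M : Matrix (Fin n ⊕ Fin n) (Fin n ⊕ Fin n) ℂ := fromBlocks A' B' (-B') A' with hM
  have hconj : T * M * Tinv = fromBlocks (A' - Complex.I • B') 0 (-B') (A' + Complex.I • B') := by
    rw [hT, hTinv, hM, fromBlocks_multiply, fromBlocks_multiply]
    rw [Matrix.fromBlocks_inj]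
    refine ⟨?_, ?_, ?_, ?_⟩ <;>
      simp [Matrix.smul_mul, Matrix.mul_smul, sub_eq_add_neg, smul_smul, Complex.I_mul_I,
        smul_add, smul_neg, neg_smul, mul_neg, neg_mul] <;>
      abel
  have hdetM : M.det = (A' - Complex.I • B').det * z := by
    have h1 : (T * M * Tinv).det = M.det := by
      rw [det_mul, det_mul, hdetT, hdetTinv, one_mul, mul_one]
    rw [← h1, hconj, det_fromBlocks_zero₁₂, hz]
  have hconjmap : (A' + Complex.I • B').map (starRingEnd ℂ) = A' - Complex.I • B' := by
    ext i j
    simp [hA', hB', Matrix.map_apply, sub_eq_add_neg]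
  have hdetconj : (A' - Complex.I • B').det = starRingEnd ℂ z := by
    rw [← hconjmap, hz]
    exact ((starRingEnd ℂ).map_det _).symm
  have hreal : ((fromBlocks A B (-B) A).det : ℂ) = M.det := by
    rw [hM]
    have h2 : Complex.ofRealHom.mapMatrix (fromBlocks A B (-B) A) = fromBlocks A' B' (-B') A' := by
      ext (i | i) (j | j) <;>
        simp [hA', hB', Matrix.map_apply, fromBlocks, RingHom.mapMatrix_apply, Complex.ofRealHom]
    calc ((fromBlocks A B (-B) A).det : ℂ)
        = (Complex.ofRealHom.mapMatrix (fromBlocks A B (-B) A)).det :=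
          Complex.ofRealHom.map_det (fromBlocks A B (-B) A)
      _ = (fromBlocks A' B' (-B') A').det := by rw [h2]
  have key : ((fromBlocks A B (-B) A).det : ℂ) = (‖z‖ ^ 2 : ℝ) := by
    rw [hreal, hdetM, hdetconj, ← Complex.normSq_eq_conj_mul_self, ← Complex.normSq_eq_norm_sq]
  have h := Complex.ofReal_injective key
  refine ⟨h, h ▸ sq_nonneg _⟩
end

section
/- For real n×n matrices A, B with A antisymmetric and B symmetric, det(-i(A + iB)) = det(B - iA) is a real number, and if C denotes the antisymmetric matrix [[A,B],[-B,A]] then det(C) = (det(-i(A+iB)))². (Determinantal consequence of the Pfaffian identity Pf(C) = det(-i(A+iB)).) -/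
/-!
With `i² = -1`, conjugating `C = [[A, B], [-B, A]]` by the unimodular matrix `[[1, i], [0, 1]]` makes
it block triangular with diagonal blocks `A - iB` and `A + iB`, so `det C = det (B - iA) det (B + iA)`.
For `A` antisymmetric and `B` symmetric, `M = B - iA` is Hermitian with `Mᵀ = B + iA`: hence `det M`
is real and `det C = det M · det Mᵀ = (det M)²`.
-/

open Matrix

section UnitSquareRoot

variable {R M : Type*} [CommRing R] [AddCommGroup M] [Module R M] {i : R}

theorem neg_smul_add_smul_eq_sub (hi : i * i = -1) (a b : M) : (-i) • (a + i • b) = b - i • a := by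
  rw [smul_add, smul_smul, neg_mul, hi, neg_neg, one_smul, neg_smul, add_comm, sub_eq_add_neg]

theorem smul_sub_smul_eq_add (hi : i * i = -1) (a b : M) : i • (a - i • b) = b + i • a := by
  rw [smul_sub, smul_smul, hi, neg_smul, one_smul, sub_neg_eq_add, add_comm]

end UnitSquareRoot

namespace Matrix

variable {n : Type*}

theorem conjTranspose_map_ofReal {m : Type*} (A : Matrix m n ℝ) :
    (A.map ((↑) : ℝ → ℂ))ᴴ = (A.map (↑))ᵀ := by
  rw [← conjTranspose_map _ fun _ => by simp, conjTranspose_eq_transpose_of_trivial,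
    transpose_map]

theorem isHermitian_sub_I_smul {A B : Matrix n n ℂ} (hA : Aᴴ = -A) (hB : B.IsHermitian) :
    (B - Complex.I • A).IsHermitian := by
  rw [IsHermitian, conjTranspose_sub, conjTranspose_smul, hA, hB.eq, Complex.star_def,
    Complex.conj_I, smul_neg, neg_smul, neg_neg]

variable [Fintype n] [DecidableEq n] {R : Type*} [CommRing R]

theorem det_fromBlocks_neg_eq_det_sub_mul_det_add {i : R} (hi : i * i = -1) (A B : Matrix n n R) :
    (fromBlocks A B (-B) A).det = (A - i • B).det * (A + i • B).det := by
  set P : Matrix (n ⊕ n) (n ⊕ n) R := fromBlocks 1 (i • 1) 0 1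
  have hP : P.det = 1 := by simp [P]
  have hconj : P * fromBlocks A B (-B) A = fromBlocks (A - i • B) 0 (-B) (A + i • B) * P := by
    simp only [P, fromBlocks_multiply, Matrix.one_mul, Matrix.mul_one, Matrix.zero_mul,
      Matrix.mul_zero, Matrix.smul_mul, Matrix.mul_smul, add_zero, zero_add, smul_neg, smul_sub,
      smul_smul, hi, neg_smul, one_smul]
    congr 1 <;> abel
  calc (fromBlocks A B (-B) A).det = (P * fromBlocks A B (-B) A).det := by
        rw [det_mul, hP, one_mul]
    _ = (A - i • B).det * (A + i • B).det := by
        rw [hconj, det_mul, hP, mul_one, det_fromBlocks_zero₁₂]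

theorem det_fromBlocks_neg_eq_det_mul_det {i : R} (hi : i * i = -1) (A B : Matrix n n R) :
    (fromBlocks A B (-B) A).det = (B - i • A).det * (B + i • A).det := by
  have hunit : (-i) ^ Fintype.card n * i ^ Fintype.card n = 1 := by
    rw [← mul_pow, neg_mul, hi, neg_neg, one_pow]
  calc (fromBlocks A B (-B) A).det = (A - i • B).det * (A + i • B).det :=
        det_fromBlocks_neg_eq_det_sub_mul_det_add hi A B
    _ = ((-i) ^ Fintype.card n * i ^ Fintype.card n) * ((A + i • B).det * (A - i • B).det) := by
        rw [hunit]; ring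
    _ = ((-i) • (A + i • B)).det * (i • (A - i • B)).det := by rw [det_smul, det_smul]; ring
    _ = (B - i • A).det * (B + i • A).det := by
        rw [neg_smul_add_smul_eq_sub hi, smul_sub_smul_eq_add hi]

theorem IsHermitian.isSelfAdjoint_det [StarRing R] {A : Matrix n n R} (hA : A.IsHermitian) :
    IsSelfAdjoint A.det := by
  rw [IsSelfAdjoint, ← det_conjTranspose, hA.eq]

end Matrix

theorem pfaffian_det_identity (n : ℕ) (A B : Matrix (Fin n) (Fin n) ℝ)
    (hA : Aᵀ = -A) (hB : Bᵀ = B) :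
    let A' : Matrix (Fin n) (Fin n) ℂ := A.map (fun x => (x : ℂ))
    let B' : Matrix (Fin n) (Fin n) ℂ := B.map (fun x => (x : ℂ))
    ((-Complex.I) • (A' + Complex.I • B')).det = (B' - Complex.I • A').det ∧
    (((-Complex.I) • (A' + Complex.I • B')).det).im = 0 ∧
    ((Matrix.fromBlocks A B (-B) A).det : ℂ) =
      (((-Complex.I) • (A' + Complex.I • B')).det) ^ 2 := by
  intro A' B'
  have hAt : A'ᵀ = -A' := by rw [← transpose_map, hA, Matrix.map_neg _ Complex.ofReal_neg]
  have hBt : B'ᵀ = B' := by rw [← transpose_map, hB]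
  have hM : (B' - Complex.I • A').IsHermitian :=
    isHermitian_sub_I_smul (by rw [conjTranspose_map_ofReal, hAt])
      (by rw [IsHermitian, conjTranspose_map_ofReal, hBt])
  have hMt : (B' - Complex.I • A')ᵀ = B' + Complex.I • A' := by
    rw [transpose_sub, transpose_smul, hAt, hBt, smul_neg, sub_neg_eq_add]
  rw [neg_smul_add_smul_eq_sub Complex.I_mul_I]
  refine ⟨rfl, Complex.conj_eq_iff_im.mp hM.isSelfAdjoint_det, ?_⟩
  have hC : ((fromBlocks A B (-B) A).det : ℂ) = (fromBlocks A' B' (-B') A').det := by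
    rw [← Complex.ofRealHom_eq_coe, RingHom.map_det, RingHom.mapMatrix_apply, fromBlocks_map,
      Matrix.map_neg _ (map_neg _)]
    rfl
  rw [hC, det_fromBlocks_neg_eq_det_mul_det Complex.I_mul_I, ← hMt, det_transpose, sq]
end
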